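/- For every integer n ≥ 5, every cycle of D_n contains an even number of edges of the matching M; in particular, no cycle of D_n contains exactly one edge of M. -/
import Mathlib


/-- Vertices of `D n`: `Sum.inl i` is `u_{i+1}`, `Sum.inr (Sum.inl i)` is `v_{i+1}`
(for `i ∈ Fin n`), and `Sum.inr (Sum.inr j)` is `w_{j+1}` (for `j ∈ Fin (2n)`);
indices are shifted by one from the (1-based) paper notation. -/
abbrev DV (n : ℕ) := Fin n ⊕ (Fin n ⊕ Fin (2*n))

/-- Generating relation for the edges of `D n`: the cycles `u₁ u₂ … uₙ u₁`,
`v₁ v₂ … vₙ v₁`, `w₁ w₂ … w_{2n} w₁`, together with the edges `vᵢ w_{2i-1}` and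
`uᵢ w_{2i}` for `i ∈ {1, …, n}` (in 0-based indexing: `vᵢ w_{2i}` and `uᵢ w_{2i+1}`). -/
def DRel (n : ℕ) : DV n → DV n → Prop
  | Sum.inl i, Sum.inl j => (j : ℕ) = ((i : ℕ) + 1) % n
  | Sum.inr (Sum.inl i), Sum.inr (Sum.inl j) => (j : ℕ) = ((i : ℕ) + 1) % n
  | Sum.inr (Sum.inr i), Sum.inr (Sum.inr j) => (j : ℕ) = ((i : ℕ) + 1) % (2*n)
  | Sum.inr (Sum.inl i), Sum.inr (Sum.inr j) => (j : ℕ) = 2*(i : ℕ)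
  | Sum.inl i, Sum.inr (Sum.inr j) => (j : ℕ) = 2*(i : ℕ) + 1
  | _, _ => False

/-- The graph `D n`. -/
def D (n : ℕ) : SimpleGraph (DV n) := SimpleGraph.fromRel (DRel n)

/-- The perfect matching `M` of `D n`, consisting of the edges `vᵢ w_{2i-1}` and
`uᵢ w_{2i}` for `i ∈ {1, …, n}` (in 0-based indexing: `vᵢ w_{2i}` and `uᵢ w_{2i+1}`). -/
def DM (n : ℕ) : Set (Sym2 (DV n)) :=
  {e | ∃ i : Fin n,
    e = s(Sum.inr (Sum.inl i), Sum.inr (Sum.inr ⟨2*(i : ℕ), by have := i.isLt; omega⟩)) ∨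
    e = s(Sum.inl i, Sum.inr (Sum.inr ⟨2*(i : ℕ) + 1, by have := i.isLt; omega⟩))}

/-- Side of a vertex: `true` for `w`-vertices, `false` for `u`/`v`-vertices. -/
def Dside {n : ℕ} : DV n → Bool
  | Sum.inr (Sum.inr _) => true
  | _ => false

lemma adj_mem_DM {n : ℕ} {a b : DV n} (h : (D n).Adj a b) :
    s(a, b) ∈ DM n ↔ Dside a ≠ Dside b := by
  obtain ⟨hne, hrel⟩ := h
  constructor
  · rintro ⟨i, hi | hi⟩ <;>
      · rw [Sym2.eq_iff] at hi
        rcases hi with ⟨rfl, rfl⟩ | ⟨rfl, rfl⟩ <;> simp [Dside]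
  · intro hside
    rcases a with i | i | i <;> rcases b with j | j | j
    · exact absurd rfl hside
    · exact absurd rfl hside
    · -- u_i -- w_j
      have hj : (j : ℕ) = 2*(i : ℕ) + 1 := by
        rcases hrel with h1 | h1
        · exact h1
        · exact h1.elim
      exact ⟨i, Or.inr (by simp [Sym2.eq_iff, Fin.ext_iff, hj])⟩
    · exact absurd rfl hside
    · exact absurd rfl hside
    · -- v_i -- w_j
      have hj : (j : ℕ) = 2*(i : ℕ) := by
        rcases hrel with h1 | h1
        · exact h1
        · exact h1.elim
      exact ⟨i, Or.inl (by simp [Sym2.eq_iff, Fin.ext_iff, hj])⟩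
    · -- w_i -- u_j
      have hj : (i : ℕ) = 2*(j : ℕ) + 1 := by
        rcases hrel with h1 | h1
        · exact h1.elim
        · exact h1
      exact ⟨j, Or.inr (by simp [Sym2.eq_iff, Fin.ext_iff, hj])⟩
    · -- w_i -- v_j
      have hj : (i : ℕ) = 2*(j : ℕ) := by
        rcases hrel with h1 | h1
        · exact h1.elim
        · exact h1
      exact ⟨j, Or.inl (by simp [Sym2.eq_iff, Fin.ext_iff, hj])⟩
    · exact absurd rfl hside

open scoped Classical in
lemma walk_parity {n : ℕ} : ∀ {u v : DV n} (p : (D n).Walk u v),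
    (p.edges.countP (fun e => decide (e ∈ DM n))) % 2 =
      (if Dside u = Dside v then 0 else 1) := by
  intro u v p
  induction p with
  | nil => simp
  | @cons a b c h p ih =>
    rw [SimpleGraph.Walk.edges_cons, List.countP_cons]
    have hm := adj_mem_DM h
    have hd : (decide (s(a, b) ∈ DM n)) = (Dside a != Dside b) := by
      by_cases hab : Dside a = Dside b <;> simp [hm, hab]
    rw [hd]
    cases ha : Dside a <;> cases hb : Dside b <;> cases hc : Dside c <;>
      simp_all <;> omega

open scoped Classical in
/-- For every integer `n ≥ 5`, every cycle of `D n` contains an even number of edges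
of the matching `M`; in particular, no cycle of `D n` contains exactly one edge of `M`. -/
theorem stmt_9 (n : ℕ) (hn : 5 ≤ n) :
    ∀ (v : DV n) (c : (D n).Walk v v), c.IsCycle →
      Even (c.edges.countP (fun e => decide (e ∈ DM n))) ∧
      c.edges.countP (fun e => decide (e ∈ DM n)) ≠ 1 := by
  intro v c _
  have h := walk_parity c
  simp only [if_pos rfl] at h
  have he : Even (c.edges.countP (fun e => decide (e ∈ DM n))) := by
    rw [Nat.even_iff]; exact h
  exact ⟨he, by rintro h1; rw [h1] at h; simp at h⟩
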